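/- For all x, y ∈ H and all p ≥ 0, the operators on alternating forms on V satisfy the commutation relation Λ_x ∘ L_y − L_y ∘ Λ_x = δ_c + B(x, y)·Ξ on A^p, where c = (1/2)·(ι(x)·ι(y) − ι(y)·ι(x)) ∈ C; explicitly, for every η ∈ A^p, Λ_x(ω_y ∧ η) − ω_y ∧ (Λ_x η) = δ_c(η) + B(x, y)·(p − dim_k(V)/2)·η. -/

import Mathlib

open CliffordAlgebra

/-- Wedge product of a `2`-form `ω` with a `p`-form `η`, evaluated on a `(p+2)`-tuple:
`(ω ∧ η)(ξ₁,…,ξ_{p+2}) = Σ_{i<j} (−1)^{i+j−1} ω(ξᵢ, ξⱼ) η(ξ₁,…,ξ̂ᵢ,…,ξ̂ⱼ,…)`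
(the sign is written for `0`-based indices). -/
def wedge2 {k V : Type*} [Field k] [AddCommGroup V] [Module k V]
    (ω : V → V → k) {p : ℕ} (η : (Fin p → V) → k) (ξ : Fin (p + 2) → V) : k :=
  ∑ i : Fin (p + 2), ∑ j : Fin (p + 2),
    if h : i < j then
      (-1 : k) ^ ((i : ℕ) + (j : ℕ) + 1) * ω (ξ i) (ξ j) *
        η (fun t => ξ (j.succAbove
          ((⟨(i : ℕ), by have h' : (i : ℕ) < (j : ℕ) := h; have := j.isLt; omega⟩ :
            Fin (p + 1)).succAbove t)))
    else 0

/-- The operator `Λ` built from the pair of families `dw, xw : Fin m → V`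
(`dw` a `τ`-dual basis, `xw α = ι(x)·u_α`):
`(Λ η)(ξ₁,…,ξ_p) := (1/2) Σ_α η(dw α, xw α, ξ₁,…,ξ_p)`. -/
noncomputable def lambdaOp {k V : Type*} [Field k] [AddCommGroup V] [Module k V]
    {m : ℕ} (dw xw : Fin m → V) {p : ℕ}
    (η : (Fin (p + 2) → V) → k) (ξ : Fin p → V) : k :=
  (2 : k)⁻¹ * ∑ α : Fin m, η (Fin.cons (dw α) (Fin.cons (xw α) ξ))

/-- The derivation `δ_a` of the algebra of forms induced by the action of `a`:
`(δ_a η)(ξ₁,…,ξ_p) := Σ_i η(ξ₁,…,a·ξᵢ,…,ξ_p)`. -/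
def deltaOp {k V A : Type*} [Field k] [AddCommGroup V] [Module k V] [SMul A V]
    (a : A) {p : ℕ} (η : (Fin p → V) → k) (ξ : Fin p → V) : k :=
  ∑ i : Fin p, η (Function.update ξ i (a • ξ i))

/-- The composite `L_ω ∘ Λ` on forms of any degree `q`, with the convention `Λ = 0`
on forms of degree `< 2`. -/
noncomputable def wedgeLambdaOp {k V : Type*} [Field k] [AddCommGroup V] [Module k V]
    (ω : V → V → k) {m : ℕ} (dw xw : Fin m → V) :
    (q : ℕ) → ((Fin q → V) → k) → (Fin q → V) → k
  | 0, _, _ => 0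
  | 1, _, _ => 0
  | (_ + 2), η, ξ => wedge2 ω (lambdaOp dw xw η) ξ

/-!
Evaluating `ω_y ∧ η` on `(u^α, ι(x)·u_α, ξ)` and splitting by how many of the first two slots
`ω_y` meets, the terms where it meets neither assemble to `L_y Λ_x η`. What survives in the
commutator is `ω_y(u^α, ι(x)·u_α) η(ξ)` and the terms pairing `u^α` or `ι(x)·u_α` with some `ξ_s`.
Summed over the dual bases, the first is `-tr(ι(y)ι(x)) = -B(x, y) dim V`, because the trace is
cyclic and `ι(x)ι(y) + ι(y)ι(x) = 2B(x, y)`; by invariance of `τ` each of the others replaces `ξ_s`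
by `ι(x)ι(y)·ξ_s`, and `δ_{ι(x)ι(y)} = δ_c + B(x, y)·p`.
-/

open Function

theorem Fin.removeNth_succ_cons {α : Type*} {n : ℕ} (b : α) (ξ : Fin (n + 1) → α)
    (s : Fin (n + 1)) :
    s.succ.removeNth (Fin.cons b ξ : Fin (n + 2) → α) = Fin.cons b (s.removeNth ξ) := by
  funext t
  cases t using Fin.cases <;> simp [Fin.removeNth]

theorem AlternatingMap.map_cons_removeNth {R M N : Type*} [CommRing R] [AddCommGroup M]
    [Module R M] [AddCommGroup N] [Module R N] {n : ℕ} (f : M [⋀^Fin (n + 1)]→ₗ[R] N)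
    (s : Fin (n + 1)) (v : M) (ξ : Fin (n + 1) → M) :
    f (Fin.cons v (s.removeNth ξ)) = (-1) ^ (s : ℕ) • f (update ξ s v) := by
  rw [← Fin.insertNth_removeNth, neg_one_pow_smul_map_insertNth]
  rfl

section Wedge

variable {k V : Type*} [Field k] [AddCommGroup V] [Module k V]

theorem wedge2_fin_zero (ω : V → V → k) (η : (Fin 0 → V) → k) (ζ : Fin 2 → V) :
    wedge2 ω η ζ = ω (ζ 0) (ζ 1) * η Fin.elim0 := by
  simp [wedge2, Fin.sum_univ_two, Subsingleton.elim _ (Fin.elim0 : Fin 0 → V)]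

theorem wedge2_cons {q : ℕ} (ω : V → V → k) (η : (Fin (q + 1) → V) → k) (a : V)
    (ζ : Fin (q + 2) → V) :
    wedge2 ω η (Fin.cons a ζ) =
      ∑ j : Fin (q + 2), (-1) ^ (j : ℕ) * ω a (ζ j) * η (j.removeNth ζ)
        + wedge2 ω (fun θ => η (Fin.cons a θ)) ζ := by
  rw [wedge2, Fin.sum_univ_succ (n := q + 2), wedge2]
  congr 1
  · rw [Fin.sum_univ_succ]
    simp only [Fin.succ_pos, dite_true, lt_irrefl, dite_false, zero_add, Fin.val_zero,
      Fin.zero_eta, Fin.zero_succAbove, Fin.succ_succAbove_succ, Fin.cons_zero, Fin.cons_succ]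
    refine Finset.sum_congr rfl fun j _ => ?_
    rw [Fin.val_succ, pow_succ, pow_succ]
    unfold Fin.removeNth
    ring
  · refine Finset.sum_congr rfl fun i _ => ?_
    rw [Fin.sum_univ_succ]
    simp only [Fin.not_lt_zero, dite_false, zero_add, Fin.succ_lt_succ_iff]
    refine Finset.sum_congr rfl fun j _ => ?_
    by_cases hij : i < j
    · rw [dif_pos hij, dif_pos hij]
      simp only [Fin.val_succ, pow_succ, Fin.cons_succ]
      congr 2
      · ring
      · funext t
        cases t using Fin.cases with
        | zero => simp
        | succ t =>
          rw [← Fin.succ_mk (q + 1) i (by omega), Fin.succ_succAbove_succ,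
            Fin.succ_succAbove_succ, Fin.cons_succ, Fin.cons_succ]
    · rw [dif_neg hij, dif_neg hij]

theorem wedge2_const_mul_sum {ι : Type*} [Fintype ι] (ω : V → V → k) {p : ℕ} (c : k)
    (θ : ι → (Fin p → V) → k) (ξ : Fin (p + 2) → V) :
    wedge2 ω (fun ζ => c * ∑ α, θ α ζ) ξ = c * ∑ α, wedge2 ω (θ α) ξ := by
  simp only [wedge2, Finset.mul_sum]
  conv_rhs => rw [Finset.sum_comm]
  refine Finset.sum_congr rfl fun i _ => ?_
  conv_rhs => rw [Finset.sum_comm]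
  refine Finset.sum_congr rfl fun j _ => ?_
  split_ifs <;> simp [mul_left_comm]

theorem wedge2_cons_cons_add_two {q : ℕ} (ω : V → V → k) (η : V [⋀^Fin (q + 2)]→ₗ[k] k)
    (a b : V) (ξ : Fin (q + 2) → V) :
    wedge2 ω η (Fin.cons a (Fin.cons b ξ)) =
      ω a b * η ξ - ∑ s, ω a (ξ s) * η (update ξ s b) + ∑ s, ω b (ξ s) * η (update ξ s a)
        + wedge2 ω (fun θ => η (Fin.cons a (Fin.cons b θ))) ξ := by
  rw [wedge2_cons, wedge2_cons, Fin.sum_univ_succ]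
  simp only [Fin.cons_zero, Fin.cons_succ, Fin.val_zero, Fin.val_succ, pow_zero, one_mul,
    Fin.removeNth_zero, Fin.tail_cons, Fin.removeNth_succ_cons, AlternatingMap.map_cons_removeNth,
    zsmul_eq_mul, Int.cast_pow, Int.cast_neg, Int.cast_one]
  have hsign : ∀ s : Fin (q + 2), (-1 : k) ^ (s : ℕ) * (-1) ^ (s : ℕ) = 1 := fun s => by
    rw [← mul_pow]; norm_num
  have ha : ∀ s : Fin (q + 2), (-1) ^ ((s : ℕ) + 1) * ω a (ξ s) * ((-1) ^ (s : ℕ) *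
      η (update ξ s b)) = -(ω a (ξ s) * η (update ξ s b)) := fun s => by
    linear_combination (-(ω a (ξ s) * η (update ξ s b))) * hsign s
  have hb : ∀ s : Fin (q + 2), (-1) ^ (s : ℕ) * ω b (ξ s) * ((-1) ^ (s : ℕ) *
      η (update ξ s a)) = ω b (ξ s) * η (update ξ s a) := fun s => by
    linear_combination (ω b (ξ s) * η (update ξ s a)) * hsign s
  rw [Finset.sum_congr rfl fun s _ => ha s, Finset.sum_congr rfl fun s _ => hb s,
    Finset.sum_neg_distrib]
  ring

def wedge2Contract (ω : V → V → k) (a b : V) :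
    (p : ℕ) → ((Fin p → V) → k) → (Fin p → V) → k
  | 0, _, _ => 0
  | 1, _, _ => 0
  | (_ + 2), η, ξ => wedge2 ω (fun θ => η (Fin.cons a (Fin.cons b θ))) ξ

theorem wedge2_cons_cons {p : ℕ} (ω : V → V → k) (η : V [⋀^Fin p]→ₗ[k] k) (a b : V)
    (ξ : Fin p → V) :
    wedge2 ω η (Fin.cons a (Fin.cons b ξ)) =
      ω a b * η ξ - ∑ s, ω a (ξ s) * η (update ξ s b) + ∑ s, ω b (ξ s) * η (update ξ s a)
        + wedge2Contract ω a b p η ξ := by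
  match p, η, ξ with
  | 0, η, ξ =>
    simp [wedge2Contract, wedge2_fin_zero, Subsingleton.elim ξ Fin.elim0]
  | 1, η, ξ =>
    have hcons : ∀ (v : V) (θ : Fin 0 → V), (Fin.cons v θ : Fin 1 → V) = update ξ 0 v :=
      fun v θ => by funext i; fin_cases i; rfl
    rw [wedge2_cons, wedge2_fin_zero, Fin.sum_univ_succ, Fin.sum_univ_one,
      Fin.removeNth_succ_cons]
    simp [wedge2Contract, hcons, sub_eq_add_neg]
  | q + 2, η, ξ => exact wedge2_cons_cons_add_two ω η a b ξ

theorem wedgeLambdaOp_eq_sum_wedge2Contract {m : ℕ} (ω : V → V → k) (dw xw : Fin m → V)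
    (p : ℕ) (η : (Fin p → V) → k) (ξ : Fin p → V) :
    wedgeLambdaOp ω dw xw p η ξ = 2⁻¹ * ∑ α, wedge2Contract ω (dw α) (xw α) p η ξ := by
  match p with
  | 0 => simp [wedgeLambdaOp, wedge2Contract]
  | 1 => simp [wedgeLambdaOp, wedge2Contract]
  | q + 2 =>
    exact wedge2_const_mul_sum ω 2⁻¹ (fun α ζ => η (Fin.cons (dw α) (Fin.cons (xw α) ζ))) ξ

theorem lambdaOp_wedge2_sub_wedgeLambdaOp {m p : ℕ} (ω : V → V → k) (dw xw : Fin m → V)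
    (η : V [⋀^Fin p]→ₗ[k] k) (ξ : Fin p → V) :
    lambdaOp dw xw (wedge2 ω η) ξ - wedgeLambdaOp ω dw xw p η ξ =
      2⁻¹ * ((∑ α, ω (dw α) (xw α)) * η ξ
        - ∑ s, η (update ξ s (∑ α, ω (dw α) (ξ s) • xw α))
        + ∑ s, η (update ξ s (∑ α, ω (xw α) (ξ s) • dw α))) := by
  simp only [lambdaOp, wedgeLambdaOp_eq_sum_wedge2Contract, wedge2_cons_cons,
    AlternatingMap.map_update_sum, AlternatingMap.map_update_smul, smul_eq_mul,
    Finset.sum_add_distrib, Finset.sum_sub_distrib, Finset.sum_mul]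
  rw [Finset.sum_comm (γ := Fin p), Finset.sum_comm (γ := Fin p)]
  ring

end Wedge

section DualBasis

variable {k V ι : Type*} [Field k] [AddCommGroup V] [Module k V] [DecidableEq ι]

def IsDualPair (τ : LinearMap.BilinForm k V) (d b : ι → V) : Prop :=
  ∀ α β, τ (d α) (b β) = if α = β then 1 else 0

variable {τ : LinearMap.BilinForm k V} {b : Module.Basis ι k V} {d : ι → V}

theorem dual_apply_eq_repr (hd : IsDualPair τ d b) (v : V) (α : ι) :
    τ (d α) v = b.repr v α := by
  rw [← b.coord_apply]
  congr 1
  exact b.ext fun β => by simp [hd α β, Finsupp.single_apply, eq_comm]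

variable [Fintype ι]

theorem sum_dual_apply_smul (hd : IsDualPair τ d b) (v : V) : ∑ α, τ (d α) v • b α = v := by
  simp only [dual_apply_eq_repr hd, b.sum_repr]

theorem sum_apply_basis_smul_dual (hτnd : τ.Nondegenerate) (hd : IsDualPair τ d b) (v : V) :
    ∑ α, τ v (b α) • d α = v := by
  refine sub_eq_zero.1 (hτnd.1 _ fun w => ?_)
  rw [map_sub, LinearMap.sub_apply, sub_eq_zero]
  conv_rhs => rw [← sum_dual_apply_smul hd w]
  simp [mul_comm]

theorem sum_dual_apply_map_basis_eq_trace (hd : IsDualPair τ d b) (f : V →ₗ[k] V) :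
    ∑ α, τ (d α) (f (b α)) = LinearMap.trace k V f := by
  simp [LinearMap.trace_eq_matrix_trace k b f, Matrix.trace, LinearMap.toMatrix_apply,
    dual_apply_eq_repr hd]

end DualBasis

section Clifford

variable {k : Type*} [Field k] {H : Type*} [AddCommGroup H] [Module k H]
  {Q : QuadraticForm k H} {B : LinearMap.BilinForm k H}

theorem ι_mul_ι_add_swap_of_bilinForm (hBQ : ∀ x, B x x = Q x) (x y : H) :
    ι Q x * ι Q y + ι Q y * ι Q x = algebraMap k _ (B x y + B y x) := by
  rw [ι_mul_ι_add_swap]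
  congr 1
  rw [QuadraticMap.polar, ← hBQ, ← hBQ, ← hBQ]
  simp only [map_add, LinearMap.add_apply]
  ring

theorem half_commutator_ι_eq [CharZero k] (hBQ : ∀ x, B x x = Q x)
    (hBsymm : ∀ x y, B x y = B y x) (x y : H) :
    (2 : k)⁻¹ • (ι Q x * ι Q y - ι Q y * ι Q x) = ι Q x * ι Q y - algebraMap k _ (B x y) := by
  have hswap : ι Q y * ι Q x = algebraMap k _ (B x y + B x y) - ι Q x * ι Q y := by
    have h := ι_mul_ι_add_swap_of_bilinForm hBQ x y
    rw [hBsymm y x] at h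
    rw [← h]
    abel
  calc (2 : k)⁻¹ • (ι Q x * ι Q y - ι Q y * ι Q x)
      = (2 : k)⁻¹ • (2 : k) • (ι Q x * ι Q y - algebraMap k _ (B x y)) := by
        congr 1
        rw [hswap, map_add, two_smul]
        abel
    _ = ι Q x * ι Q y - algebraMap k _ (B x y) := by
        rw [smul_smul, inv_mul_cancel₀ two_ne_zero, one_smul]

variable {V : Type*} [AddCommGroup V] [Module k V] [Module (CliffordAlgebra Q) V]

variable (Q) in
def IsCliffordInvariant (τ : LinearMap.BilinForm k V) : Prop :=
  ∀ (a : CliffordAlgebra Q) (u v : V), τ (a • u) v = τ u (involute (reverse a) • v)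

variable {τ : LinearMap.BilinForm k V}

theorem apply_ι_smul_left (hτinv : IsCliffordInvariant Q τ) (y : H) (u v : V) :
    τ (ι Q y • u) v = -τ u (ι Q y • v) := by
  rw [hτinv, reverse_ι, involute_ι, neg_smul, map_neg]

theorem apply_ι_mul_ι_smul_left (hτinv : IsCliffordInvariant Q τ) (x y : H) (u v : V) :
    τ ((ι Q y * ι Q x) • u) v = τ u ((ι Q x * ι Q y) • v) := by
  rw [hτinv, reverse.map_mul, reverse_ι, reverse_ι, map_mul, involute_ι, involute_ι, neg_mul_neg]

variable {n : Type*} [Fintype n] [DecidableEq n] {b : Module.Basis n k V} {d : n → V}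

theorem sum_apply_ι_smul_ι_smul_smul_dual (hτinv : IsCliffordInvariant Q τ)
    (hτsymm : ∀ u v, τ u v = τ v u) (hτnd : τ.Nondegenerate) (hd : IsDualPair τ d b)
    (x y : H) (v : V) :
    ∑ α, τ (ι Q y • ι Q x • b α) v • d α = (ι Q x * ι Q y) • v := by
  conv_rhs => rw [← sum_apply_basis_smul_dual hτnd hd ((ι Q x * ι Q y) • v)]
  refine Finset.sum_congr rfl fun α _ => ?_
  rw [smul_smul, apply_ι_mul_ι_smul_left hτinv, hτsymm]

variable [IsScalarTower k (CliffordAlgebra Q) V]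

theorem trace_lsmul_ι_mul_ι [CharZero k] [FiniteDimensional k V] (hBQ : ∀ x, B x x = Q x)
    (hBsymm : ∀ x y, B x y = B y x) (x y : H) :
    LinearMap.trace k V (Algebra.lsmul k k V (ι Q y * ι Q x)) = B x y * Module.finrank k V := by
  have hcomm : LinearMap.trace k V (Algebra.lsmul k k V (ι Q x * ι Q y)) =
      LinearMap.trace k V (Algebra.lsmul k k V (ι Q y * ι Q x)) := by
    rw [map_mul (Algebra.lsmul k k V), map_mul (Algebra.lsmul k k V), LinearMap.trace_mul_comm]
  have hsum := congrArg (fun a => LinearMap.trace k V (Algebra.lsmul k k V a))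
    (ι_mul_ι_add_swap_of_bilinForm hBQ x y)
  simp only [map_add, Algebra.algebraMap_eq_smul_one, map_smul, map_one,
    LinearMap.trace_one, smul_eq_mul, hcomm, hBsymm y x] at hsum
  linear_combination hsum / 2

theorem sum_apply_ι_smul_dual_ι_smul_basis [CharZero k] [FiniteDimensional k V]
    (hτinv : IsCliffordInvariant Q τ) (hd : IsDualPair τ d b) (hBQ : ∀ x, B x x = Q x)
    (hBsymm : ∀ x y, B x y = B y x) (x y : H) :
    ∑ α, τ (ι Q y • d α) (ι Q x • b α) = -(B x y * Module.finrank k V) := by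
  simp only [apply_ι_smul_left hτinv, smul_smul, Finset.sum_neg_distrib]
  rw [← trace_lsmul_ι_mul_ι hBQ hBsymm, ← sum_dual_apply_map_basis_eq_trace hd]
  rfl

theorem sum_apply_ι_smul_dual_smul (hτinv : IsCliffordInvariant Q τ) (hd : IsDualPair τ d b)
    (x y : H) (v : V) :
    ∑ α, τ (ι Q y • d α) v • ι Q x • b α = -((ι Q x * ι Q y) • v) := by
  simp only [apply_ι_smul_left hτinv, neg_smul, Finset.sum_neg_distrib, smul_comm _ (ι Q x),
    ← Finset.smul_sum, sum_dual_apply_smul hd, mul_smul, smul_neg]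

end Clifford

theorem lambda_L_commutator
    {k : Type*} [Field k] [CharZero k]
    {H : Type*} [AddCommGroup H] [Module k H]
    (Q : QuadraticForm k H)
    (B : LinearMap.BilinForm k H)
    (hBQ : ∀ x, B x x = Q x)
    (hBsymm : ∀ x y, B x y = B y x)
    {V : Type*} [AddCommGroup V] [Module k V] [FiniteDimensional k V]
    [Module (CliffordAlgebra Q) V] [IsScalarTower k (CliffordAlgebra Q) V]
    (τ : LinearMap.BilinForm k V)
    (hτsymm : ∀ u v : V, τ u v = τ v u)
    (hτnd : LinearMap.BilinForm.Nondegenerate τ)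
    (hτinv : ∀ (a : CliffordAlgebra Q) (u v : V),
      τ (a • u) v = τ u (involute (reverse a) • v))
    {m : ℕ} (b : Module.Basis (Fin m) k V) (d : Fin m → V)
    (hd : ∀ α β : Fin m, τ (d α) (b β) = if α = β then 1 else 0)
    (x y : H) (p : ℕ) (η : AlternatingMap k V k (Fin p)) (ξ : Fin p → V) :
    lambdaOp d (fun α => ι Q x • b α)
        (wedge2 (fun u v => τ (ι Q y • u) v) (⇑η)) ξ
      - wedgeLambdaOp (fun u v => τ (ι Q y • u) v) d (fun α => ι Q x • b α) p (⇑η) ξ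
      = deltaOp ((2 : k)⁻¹ • (ι Q x * ι Q y - ι Q y * ι Q x)) (⇑η) ξ
        + B x y * ((p : k) - (Module.finrank k V : k) / 2) * η ξ := by
  have hδ : deltaOp ((2 : k)⁻¹ • (ι Q x * ι Q y - ι Q y * ι Q x)) (⇑η) ξ =
      ∑ s, η (update ξ s ((ι Q x * ι Q y) • ξ s)) - p * (B x y * η ξ) := by
    simp only [deltaOp, half_commutator_ι_eq hBQ hBsymm, sub_smul, algebraMap_smul,
      AlternatingMap.map_update_sub, AlternatingMap.map_update_smul, update_eq_self, smul_eq_mul,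
      Finset.sum_sub_distrib, Finset.sum_const, Finset.card_univ, Fintype.card_fin, nsmul_eq_mul]
  rw [lambdaOp_wedge2_sub_wedgeLambdaOp, sum_apply_ι_smul_dual_ι_smul_basis hτinv hd hBQ hBsymm, hδ]
  simp only [sum_apply_ι_smul_dual_smul hτinv hd,
    sum_apply_ι_smul_ι_smul_smul_dual hτinv hτsymm hτnd hd, AlternatingMap.map_update_neg,
    Finset.sum_neg_distrib]
  ring
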